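/- Let F = (A, C) be a finite AAF and l a labelling of F. If there exist CC-wise total orders ≼ and ≼' on F such that l is a complete labelling of F^1_≼ (Reduction 1) and l is a complete labelling of F^4_≼' (Reduction 4), then l is a complete labelling of F itself. -/
import Mathlib


/-- The three labels of a labelling: `inn` (in), `out`, `undec`. -/
inductive Label where
  | inn : Label
  | out : Label
  | undec : Label
deriving DecidableEq

/-- Undirected connectivity: reachability in the symmetric closure of `C`.
`Conn C a b` holds iff `a` and `b` are joined by an undirected path, i.e.
they lie in the same connected component of `(A, C)`. -/
def Conn {A : Type*} (C : A → A → Prop) : A → A → Prop :=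
  Relation.ReflTransGen (fun x y => C x y ∨ C y x)

/-- A CC-wise total order on the AAF `(A, C)`: a reflexive transitive relation
whose restriction to each connected component is total. -/
structure CCOrder {A : Type*} (C : A → A → Prop) where
  le : A → A → Prop
  refl : ∀ a, le a a
  trans : ∀ a b c, le a b → le b c → le a c
  total : ∀ a b, Conn C a b → le a b ∨ le b a

/-- Strict part: `a ≺ b` iff `a ≼ b` and not `b ≼ a`. -/
def CCOrder.lt {A : Type*} {C : A → A → Prop} (r : CCOrder C) (a b : A) : Prop :=
  r.le a b ∧ ¬ r.le b a

/-- Reduction 1: `C₁ = {(a,b) | ((a,b) ∈ C ∧ b ≼ a) ∨ ((b,a) ∈ C ∧ b ≺ a)}`. -/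
def red1 {A : Type*} (C : A → A → Prop) (r : CCOrder C) (a b : A) : Prop :=
  (C a b ∧ r.le b a) ∨ (C b a ∧ r.lt b a)

/-- Reduction 2: `C₂ = {(a,b) ∈ C | b ≼ a ∨ (b,a) ∉ C}`. -/
def red2 {A : Type*} (C : A → A → Prop) (r : CCOrder C) (a b : A) : Prop :=
  C a b ∧ (r.le b a ∨ ¬ C b a)

/-- Reduction 3: `C₁ ∪ C₂`. -/
def red3 {A : Type*} (C : A → A → Prop) (r : CCOrder C) (a b : A) : Prop :=
  red1 C r a b ∨ red2 C r a b

/-- Reduction 4: `C₄ = {(a,b) ∈ C | b ≼ a}`. -/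
def red4 {A : Type*} (C : A → A → Prop) (r : CCOrder C) (a b : A) : Prop :=
  C a b ∧ r.le b a

/-- `l` is a complete labelling of the attack relation `C`:
`l a = in` iff all attackers of `a` are `out`, and
`l a = out` iff some attacker of `a` is `in` (and `undec` otherwise,
which is automatic for a three-valued labelling). -/
def CompleteLabelling {A : Type*} (C : A → A → Prop) (l : A → Label) : Prop :=
  ∀ a, (l a = Label.inn ↔ ∀ b, C b a → l b = Label.out) ∧
       (l a = Label.out ↔ ∃ b, C b a ∧ l b = Label.inn)

/-- `(a,b) ∈ F₁`: an attack of `C` assigned value 1 by `f`. -/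
def inF1 {A : Type*} (C : A → A → Prop) (f : A → A → Bool) (a b : A) : Prop :=
  C a b ∧ f a b = true

/-- `(a,b) ∈ F₀`: an attack of `C` assigned value 0 by `f`. -/
def inF0 {A : Type*} (C : A → A → Prop) (f : A → A → Bool) (a b : A) : Prop :=
  C a b ∧ f a b = false

/-- The relation `conv(F₀) ∪ F₁`. -/
def Drel {A : Type*} (C : A → A → Prop) (f : A → A → Bool) (a b : A) : Prop :=
  inF0 C f b a ∨ inF1 C f a b

/-- The relation `F₁ \ conv(F₀)`. -/
def Erel {A : Type*} (C : A → A → Prop) (f : A → A → Bool) (a b : A) : Prop :=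
  inF1 C f a b ∧ ¬ inF0 C f b a

/-- `f` is a preference function over `(A, C)`: every directed cycle of
`conv(F₀) ∪ F₁` is entirely contained in `F₁ \ conv(F₀)`.  Equivalently
(edge-wise): every edge of `conv(F₀) ∪ F₁` lying on a directed cycle
(i.e. admitting a return path) belongs to `F₁ \ conv(F₀)`. -/
def IsPrefFun {A : Type*} (C : A → A → Prop) (f : A → A → Bool) : Prop :=
  ∀ a b, Drel C f a b → Relation.ReflTransGen (Drel C f) b a → Erel C f a b

/-- A ranking function for `(F, l)` (assuming no argument is labelled `out`):
(1) every attack touching an `in`-labelled argument strictly decreases rank, and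
(2) every `undec` argument has an `undec` attacker of rank at most its own. -/
def IsRanking {A : Type*} (C : A → A → Prop) (l : A → Label) (ψ : A → ℤ) : Prop :=
  (∀ u v, C u v → (l u = Label.inn ∨ l v = Label.inn) → ψ u > ψ v) ∧
  (∀ u, l u = Label.undec → ∃ v, C v u ∧ l v = Label.undec ∧ ψ v ≤ ψ u)
/-- if `l` is complete under some Reduction-1 reduct and under
some Reduction-4 reduct of `F`, then `l` is complete on `F` itself. -/
theorem stmt14 {A : Type*} [Fintype A] (C : A → A → Prop) (l : A → Label)
    (h1 : ∃ r : CCOrder C, CompleteLabelling (red1 C r) l)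
    (h4 : ∃ r : CCOrder C, CompleteLabelling (red4 C r) l) :
    CompleteLabelling C l := by
  obtain ⟨r, h1⟩ := h1
  obtain ⟨s, h4⟩ := h4
  intro a
  constructor
  · constructor
    · intro ha b hba
      have conn : Conn C a b := Relation.ReflTransGen.single (Or.inr hba)
      by_cases hs : s.le a b
      · exact (h4 a).1.mp ha b ⟨hba, hs⟩
      · by_cases hrab : r.le a b
        · exact (h1 a).1.mp ha b (Or.inl ⟨hba, hrab⟩)
        · have hrba : r.le b a := (r.total a b conn).resolve_left hrab
          exact (h1 b).2.mpr ⟨a, Or.inr ⟨hba, hrba, hrab⟩, ha⟩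
    · intro hall
      exact (h4 a).1.mpr fun b hb => hall b hb.1
  · constructor
    · intro ha
      obtain ⟨b, ⟨hba, _⟩, hb⟩ := (h4 a).2.mp ha
      exact ⟨b, hba, hb⟩
    · rintro ⟨b, hba, hb⟩
      have conn : Conn C a b := Relation.ReflTransGen.single (Or.inr hba)
      by_cases hs : s.le a b
      · exact (h4 a).2.mpr ⟨b, ⟨hba, hs⟩, hb⟩
      · by_cases hrab : r.le a b
        · exact (h1 a).2.mpr ⟨b, Or.inl ⟨hba, hrab⟩, hb⟩
        · have hrba : r.le b a := (r.total a b conn).resolve_left hrab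
          exact (h1 b).1.mp hb a (Or.inr ⟨hba, hrba, hrab⟩)
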